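/- arXiv:1801.00379 — 2 statements merged into one kernel-verified Lean document; each statement's English description precedes it below -/
import Mathlib

section
/- Let K be an algebraically closed field and m ≥ 1. Let w be a word with constants in SL_2(K), i.e. an element of the free product (FreeGroup over Fin m) ∗ SL_2(K), with evaluation map w̃ : SL_2(K)^m → SL_2(K) sending (g_1,…,g_m) to the image of w under the homomorphism mapping the i-th free generator to g_i and fixing the constants. If the function (g_1,…,g_m) ↦ trace(w̃(g_1,…,g_m)) is not a constant function on SL_2(K)^m, then for every diagonalizable matrix g ∈ SL_2(K) with g ≠ I and g ≠ −I there exist (g_1,…,g_m) ∈ SL_2(K)^m and h ∈ SL_2(K) such that h · w̃(g_1,…,g_m) · h⁻¹ = g (i.e. every non-central semisimple conjugacy class of SL_2(K) intersects the image of w̃). -/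
/-!
Join two tuples on which the trace of the word map differs by a polynomial path `t ↦ γ(t)` in
`SL₂(K)ᵐ`; such paths exist because `SL₂(K)` is generated by transvections and
`t ↦ transvection (t • c)` joins `1` to `transvection c`. Along the path the trace of the word map
is a nonconstant polynomial in `t`, so over the algebraically closed field `K` it takes every value,
in particular `tr g`. A non-central semisimple `g` has `tr g ≠ ±2`, and any `A ∈ SL₂(K)` with
`tr A = τ ≠ ±2` is conjugate to the companion matrix of `X² - τ X + 1`: in the basis `v, v A` for a
cyclic vector `v`, rescaled to determinant one, `A` acts by that matrix.
-/

open Matrix Polynomial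
open scoped MatrixGroups

namespace Matrix

lemma IsDiag.eq_scalar_of_det_of_trace {F : Type*} [Field F] {D : Matrix (Fin 2) (Fin 2) F}
    (hD : D.IsDiag) {e : F} (hdet : D.det = e ^ 2) (htr : D.trace = 2 * e) :
    D = scalar (Fin 2) e := by
  have h01 : D 0 1 = 0 := hD (by decide)
  have h10 : D 1 0 = 0 := hD (by decide)
  rw [det_fin_two, h01, zero_mul, sub_zero] at hdet
  rw [trace_fin_two] at htr
  have h00 : D 0 0 = e := by
    have hsq : (D 0 0 - e) ^ 2 = 0 := by linear_combination D 0 0 * htr - hdet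
    exact sub_eq_zero.mp (pow_eq_zero_iff two_ne_zero |>.mp hsq)
  have h11 : D 1 1 = e := by linear_combination htr - h00
  ext i j
  fin_cases i <;> fin_cases j <;> simp [h00, h01, h10, h11]

lemma eq_scalar_of_isDiag_units_conj {F : Type*} [Field F] {g : Matrix (Fin 2) (Fin 2) F}
    {P : GL (Fin 2) F}
    (hD : IsDiag ((↑(P⁻¹) : Matrix (Fin 2) (Fin 2) F) * g * (↑P : Matrix (Fin 2) (Fin 2) F)))
    {e : F} (hdet : g.det = e ^ 2) (htr : g.trace = 2 * e) : g = scalar (Fin 2) e := by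
  have hconj := hD.eq_scalar_of_det_of_trace (by rwa [det_units_conj'])
    (by rwa [trace_units_conj'])
  calc g = (↑P : Matrix (Fin 2) (Fin 2) F) * ((↑(P⁻¹) : Matrix (Fin 2) (Fin 2) F) * g * ↑P) *
        ↑(P⁻¹) := by simp [mul_assoc]
    _ = scalar (Fin 2) e := by
      rw [hconj, ← (scalar_commute e (Commute.all e) _).eq, mul_assoc]
      simp

variable {R : Type*} [CommRing R]

def krylovFinTwo (A : Matrix (Fin 2) (Fin 2) R) (v : Fin 2 → R) : Matrix (Fin 2) (Fin 2) R :=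
  of ![v, v ᵥ* A]

lemma krylovFinTwo_mul (A : Matrix (Fin 2) (Fin 2) R) (v : Fin 2 → R) :
    krylovFinTwo A v * A = !![0, 1; -A.det, A.trace] * krylovFinTwo A v := by
  ext i j
  fin_cases i <;> fin_cases j <;>
    simp [krylovFinTwo, vecMul, dotProduct, Fin.sum_univ_two, det_fin_two, trace_fin_two,
      mul_apply] <;> ring

lemma krylovFinTwo_smul (A : Matrix (Fin 2) (Fin 2) R) (t : R) (v : Fin 2 → R) :
    krylovFinTwo A (t • v) = t • krylovFinTwo A v := by
  ext i j
  fin_cases i <;> simp [krylovFinTwo, smul_vecMul]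

lemma exists_det_krylovFinTwo_ne_zero {F : Type*} [Field F] {A : Matrix (Fin 2) (Fin 2) F}
    (hA : ∀ c : F, A ≠ scalar (Fin 2) c) : ∃ v, (krylovFinTwo A v).det ≠ 0 := by
  by_contra! h
  have h0 := h ![1, 0]
  have h1 := h ![0, 1]
  have h2 := h ![1, 1]
  simp [krylovFinTwo, det_fin_two, vecMul, dotProduct, Fin.sum_univ_two] at h0 h1 h2
  rw [h0, h1] at h2
  apply hA (A 0 0)
  ext i j
  fin_cases i <;> fin_cases j <;> simp [h0, h1]
  linear_combination h2

end Matrix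

namespace Matrix.SpecialLinearGroup

section Conjugacy

variable {F : Type*} [Field F]

def companionFinTwo {R : Type*} [CommRing R] (t : R) : SL(2, R) :=
  ⟨!![0, 1; -1, t], by simp [det_fin_two_of]⟩

lemma ne_scalar_of_trace_ne (A : SL(2, F)) (h2 : (A : Matrix (Fin 2) (Fin 2) F).trace ≠ 2)
    (hm2 : (A : Matrix (Fin 2) (Fin 2) F).trace ≠ -2) (c : F) :
    (A : Matrix (Fin 2) (Fin 2) F) ≠ scalar (Fin 2) c := by
  intro hA
  have hc : c = 1 ∨ c = -1 := by simpa [hA] using A.det_coe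
  rcases hc with rfl | rfl
  · norm_num [hA] at h2
  · norm_num [hA] at hm2

variable [IsAlgClosed F]

lemma isConj_companionFinTwo {A : SL(2, F)}
    (hA : ∀ c : F, (A : Matrix (Fin 2) (Fin 2) F) ≠ scalar (Fin 2) c) :
    IsConj A (companionFinTwo (A : Matrix (Fin 2) (Fin 2) F).trace) := by
  obtain ⟨v, hv⟩ := exists_det_krylovFinTwo_ne_zero hA
  obtain ⟨t, ht⟩ :=
    IsAlgClosed.exists_pow_nat_eq (krylovFinTwo (A : Matrix (Fin 2) (Fin 2) F) v).det⁻¹ two_pos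
  have hdet : (krylovFinTwo (A : Matrix (Fin 2) (Fin 2) F) (t • v)).det = 1 := by
    rw [krylovFinTwo_smul, det_smul, Fintype.card_fin, ht, inv_mul_cancel₀ hv]
  let P : SL(2, F) := ⟨_, hdet⟩
  have hPA : P * A = companionFinTwo (A : Matrix (Fin 2) (Fin 2) F).trace * P := by
    refine Subtype.ext ?_
    have := krylovFinTwo_mul (A : Matrix (Fin 2) (Fin 2) F) (t • v)
    rw [A.det_coe] at this
    exact this
  exact isConj_iff.mpr ⟨P, by rw [hPA, mul_inv_cancel_right]⟩

lemma isConj_of_trace_eq {A B : SL(2, F)} (h2 : (A : Matrix (Fin 2) (Fin 2) F).trace ≠ 2)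
    (hm2 : (A : Matrix (Fin 2) (Fin 2) F).trace ≠ -2)
    (h : (A : Matrix (Fin 2) (Fin 2) F).trace = (B : Matrix (Fin 2) (Fin 2) F).trace) :
    IsConj A B := by
  have hB := isConj_companionFinTwo (ne_scalar_of_trace_ne B (h ▸ h2) (h ▸ hm2))
  rw [← h] at hB
  exact (isConj_companionFinTwo (ne_scalar_of_trace_ne A h2 hm2)).trans (isConj_comm.mp hB)

end Conjugacy

section PolynomialPaths

lemma map_transvection {R S : Type*} [CommRing R] [CommRing S] (f : R →+* S) {i j : Fin 2}
    (hij : i ≠ j) (b : R) : map f (transvection hij b) = transvection hij (f b) := by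
  ext : 1
  simp [transvection_coe, Matrix.one_apply, Matrix.single_apply, apply_ite f]

variable {F : Type*} [Field F]

lemma map_evalRingHom_map_C (s : F) (g : SL(2, F)) : map (evalRingHom s) (map C g) = g := by
  ext
  simp

lemma map_evalRingHom_comp_map_C (s : F) :
    (map (evalRingHom s)).comp (map (C : F →+* F[X])) = MonoidHom.id SL(2, F) :=
  MonoidHom.ext (map_evalRingHom_map_C s)

lemma exists_polynomial_path_from_one (g : SL(2, F)) :
    ∃ γ : SL(2, F[X]), map (evalRingHom 0) γ = 1 ∧ map (evalRingHom 1) γ = g := by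
  induction g using SL2.transvection_induction with
  | htransvec i j hij c =>
    exact ⟨transvection hij (C c * X), by simp [map_transvection, transvection_coeff_zero],
      by simp [map_transvection]⟩
  | hmul A B hA hB =>
    obtain ⟨γ, hγ₀, hγ₁⟩ := hA
    obtain ⟨δ, hδ₀, hδ₁⟩ := hB
    exact ⟨γ * δ, by simp [hγ₀, hδ₀], by simp [hγ₁, hδ₁]⟩

lemma exists_polynomial_path (g₀ g₁ : SL(2, F)) :
    ∃ γ : SL(2, F[X]), map (evalRingHom 0) γ = g₀ ∧ map (evalRingHom 1) γ = g₁ := by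
  obtain ⟨δ, hδ₀, hδ₁⟩ := exists_polynomial_path_from_one (g₀⁻¹ * g₁)
  exact ⟨map C g₀ * δ, by simp [map_evalRingHom_map_C, hδ₀],
    by simp [map_evalRingHom_map_C, hδ₁]⟩

end PolynomialPaths

end Matrix.SpecialLinearGroup

section WordMap

variable {ι G : Type*} [Group G]

def wordMap (w : Monoid.Coprod (FreeGroup ι) G) (gs : ι → G) : G :=
  Monoid.Coprod.lift (FreeGroup.lift gs) (MonoidHom.id G) w

lemma map_coprodLift_freeGroupLift {H H' : Type*} [Group H] [Group H'] (f : H →* H')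
    (γ : ι → H) (ψ : G →* H) (w : Monoid.Coprod (FreeGroup ι) G) :
    f (Monoid.Coprod.lift (FreeGroup.lift γ) ψ w)
      = Monoid.Coprod.lift (FreeGroup.lift (f ∘ γ)) (f.comp ψ) w := by
  rw [← MonoidHom.comp_apply, Monoid.Coprod.comp_lift]
  congr
  ext
  simp

end WordMap

section TraceOfWordMap

open Matrix.SpecialLinearGroup

variable {ι K : Type*} [Field K]

lemma map_evalRingHom_coprodLift (s : K) (γ : ι → SL(2, K[X]))
    (w : Monoid.Coprod (FreeGroup ι) SL(2, K)) :
    map (evalRingHom s) (Monoid.Coprod.lift (FreeGroup.lift γ) (map C) w)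
      = wordMap w fun i ↦ map (evalRingHom s) (γ i) := by
  rw [map_coprodLift_freeGroupLift, map_evalRingHom_comp_map_C]
  rfl

lemma exists_trace_wordMap_eq [IsAlgClosed K] {w : Monoid.Coprod (FreeGroup ι) SL(2, K)}
    (hw : ∃ g₀ g₁ : ι → SL(2, K), ((wordMap w g₀ : SL(2, K)) : Matrix (Fin 2) (Fin 2) K).trace ≠
      ((wordMap w g₁ : SL(2, K)) : Matrix (Fin 2) (Fin 2) K).trace) (τ : K) :
    ∃ gs : ι → SL(2, K), ((wordMap w gs : SL(2, K)) : Matrix (Fin 2) (Fin 2) K).trace = τ := by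
  obtain ⟨g₀, g₁, hne⟩ := hw
  choose γ hγ₀ hγ₁ using fun i ↦ exists_polynomial_path (g₀ i) (g₁ i)
  set p : K[X] :=
    ((Monoid.Coprod.lift (FreeGroup.lift γ) (map C) w : SL(2, K[X])) :
      Matrix (Fin 2) (Fin 2) K[X]).trace
  have hp (s : K) : p.eval s =
      ((wordMap w fun i ↦ map (evalRingHom s) (γ i) : SL(2, K)) :
        Matrix (Fin 2) (Fin 2) K).trace := by
    rw [← map_evalRingHom_coprodLift, map_apply_coe, RingHom.mapMatrix_apply,
      ← AddMonoidHom.map_trace]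
    rfl
  have hdeg : p.natDegree ≠ 0 := fun h ↦ hne <| by
    rw [← funext hγ₀, ← funext hγ₁, ← hp, ← hp, eq_C_of_natDegree_eq_zero h, eval_C, eval_C]
  obtain ⟨s, hs⟩ := IsAlgClosed.eval_surjective hdeg τ
  exact ⟨_, (hp s).symm.trans hs⟩

end TraceOfWordMap

theorem word_with_constants_image_meets_noncentral_semisimple_classes_general
    (K : Type*) [Field K] [IsAlgClosed K] (m : ℕ)
    (w : Monoid.Coprod (FreeGroup (Fin m)) (Matrix.SpecialLinearGroup (Fin 2) K))
    (hnc : ¬ ∀ g g' : Fin m → Matrix.SpecialLinearGroup (Fin 2) K,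
      Matrix.trace (((Monoid.Coprod.lift (FreeGroup.lift g) (MonoidHom.id _)) w :
          Matrix.SpecialLinearGroup (Fin 2) K) : Matrix (Fin 2) (Fin 2) K)
        = Matrix.trace (((Monoid.Coprod.lift (FreeGroup.lift g') (MonoidHom.id _)) w :
          Matrix.SpecialLinearGroup (Fin 2) K) : Matrix (Fin 2) (Fin 2) K))
    (g : Matrix.SpecialLinearGroup (Fin 2) K)
    (hdiag : ∃ P : GL (Fin 2) K,
      Matrix.IsDiag ((↑(P⁻¹) : Matrix (Fin 2) (Fin 2) K) * (↑g : Matrix (Fin 2) (Fin 2) K) *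
        (↑P : Matrix (Fin 2) (Fin 2) K)))
    (hg1 : (↑g : Matrix (Fin 2) (Fin 2) K) ≠ 1)
    (hg2 : (↑g : Matrix (Fin 2) (Fin 2) K) ≠ -1) :
    ∃ (gs : Fin m → Matrix.SpecialLinearGroup (Fin 2) K)
      (h : Matrix.SpecialLinearGroup (Fin 2) K),
      h * ((Monoid.Coprod.lift (FreeGroup.lift gs) (MonoidHom.id _)) w) * h⁻¹ = g := by
  obtain ⟨P, hP⟩ := hdiag
  have htr2 : (g : Matrix (Fin 2) (Fin 2) K).trace ≠ 2 := fun h ↦ hg1 <| by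
    rw [eq_scalar_of_isDiag_units_conj hP (e := 1) (by simp) (by rw [h]; norm_num), map_one]
  have htrm2 : (g : Matrix (Fin 2) (Fin 2) K).trace ≠ -2 := fun h ↦ hg2 <| by
    rw [eq_scalar_of_isDiag_units_conj hP (e := -1) (by simp) (by rw [h]; norm_num), map_neg,
      map_one]
  simp only [not_forall] at hnc
  obtain ⟨gs, hgs⟩ := exists_trace_wordMap_eq hnc (g : Matrix (Fin 2) (Fin 2) K).trace
  obtain ⟨h, hh⟩ :=
    isConj_iff.mp (SpecialLinearGroup.isConj_of_trace_eq (hgs ▸ htr2) (hgs ▸ htrm2) hgs)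
  exact ⟨gs, h, hh⟩

/-- If the trace of a word map with constants on `SL₂(K)` (`K` algebraically closed) is not
a constant function, then every non-central semisimple (= diagonalizable, `≠ ±1`) conjugacy
class of `SL₂(K)` meets the image of the word map. -/
theorem word_with_constants_image_meets_noncentral_semisimple_classes
    (K : Type*) [Field K] [IsAlgClosed K] (m : ℕ) (hm : 1 ≤ m)
    (w : Monoid.Coprod (FreeGroup (Fin m)) (Matrix.SpecialLinearGroup (Fin 2) K))
    (hnc : ¬ ∀ g g' : Fin m → Matrix.SpecialLinearGroup (Fin 2) K,
      Matrix.trace (((Monoid.Coprod.lift (FreeGroup.lift g) (MonoidHom.id _)) w :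
          Matrix.SpecialLinearGroup (Fin 2) K) : Matrix (Fin 2) (Fin 2) K)
        = Matrix.trace (((Monoid.Coprod.lift (FreeGroup.lift g') (MonoidHom.id _)) w :
          Matrix.SpecialLinearGroup (Fin 2) K) : Matrix (Fin 2) (Fin 2) K))
    (g : Matrix.SpecialLinearGroup (Fin 2) K)
    (hdiag : ∃ P : GL (Fin 2) K,
      Matrix.IsDiag ((↑(P⁻¹) : Matrix (Fin 2) (Fin 2) K) * (↑g : Matrix (Fin 2) (Fin 2) K) *
        (↑P : Matrix (Fin 2) (Fin 2) K)))
    (hg1 : (↑g : Matrix (Fin 2) (Fin 2) K) ≠ 1)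
    (hg2 : (↑g : Matrix (Fin 2) (Fin 2) K) ≠ -1) :
    ∃ (gs : Fin m → Matrix.SpecialLinearGroup (Fin 2) K)
      (h : Matrix.SpecialLinearGroup (Fin 2) K),
      h * ((Monoid.Coprod.lift (FreeGroup.lift gs) (MonoidHom.id _)) w) * h⁻¹ = g :=
  word_with_constants_image_meets_noncentral_semisimple_classes_general K m w hnc g hdiag hg1 hg2
end

section
/- Let m, n be positive integers. For every g ∈ SL_2(ℂ) there exist x, y ∈ SL_2(ℂ) such that x^m·y^n·x^{−m}·y^{−n} = g or x^m·y^n·x^{−m}·y^{−n} = −g. Equivalently, the word map on PSL_2(ℂ) = SL_2(ℂ)/{±I} induced by the word w = ⁅x^m, y^n⁆ is surjective. -/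
/-!
The centre `{±1}` is hit by `x = y = 1`. Over an algebraically closed field a non-central element
of `SL₂` is conjugate to the companion matrix of its trace, so non-central elements with equal
traces are conjugate; and the values of `⁅xᵐ, yⁿ⁆` are closed under conjugation. It remains to
realise every trace by a non-central value. For `a = diag(t, t⁻¹)` with `t⁴ ≠ 1` and any `b`,
`tr ⁅a, b⁆ = 2 - (t - t⁻¹)² b₀₁ b₁₀`, and as `b` runs over the conjugates of `a` the product
`b₀₁ b₁₀` takes every value. Both `a` and its conjugates are `m`-th and `n`-th powers, since
`diag(t, t⁻¹) = diag(s, s⁻¹)ᵐ` for `sᵐ = t`.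
-/

open Matrix Matrix.SpecialLinearGroup Subgroup Polynomial
open scoped MatrixGroups commutatorElement

lemma exists_commutatorElement_pow_eq_of_isConj {G : Type*} [Group G] {x y g : G} {m n : ℕ}
    (h : IsConj ⁅x ^ m, y ^ n⁆ g) : ∃ x' y' : G, ⁅x' ^ m, y' ^ n⁆ = g := by
  obtain ⟨c, rfl⟩ := isConj_iff.1 h
  exact ⟨MulAut.conj c x, MulAut.conj c y, by simp only [← map_pow, ← map_commutatorElement]; rfl⟩

lemma exists_mul_one_add_eq {K : Type*} [Field K] [IsAlgClosed K] (c : K) :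
    ∃ u : K, u * (1 + u) = c := by
  obtain ⟨u, hu⟩ := IsAlgClosed.exists_root (C 1 * X ^ 2 + C 1 * X + C (-c))
    (by rw [degree_quadratic one_ne_zero]; decide)
  simp only [map_one, one_mul, map_neg, IsRoot.def, eval_add, eval_pow, eval_X, eval_neg,
    eval_C] at hu
  exact ⟨u, by linear_combination hu⟩

lemma exists_ne_zero_pow_four_ne_one (K : Type*) [Field K] [Infinite K] :
    ∃ t : K, t ≠ 0 ∧ t ^ 4 ≠ 1 := by
  classical
  obtain ⟨t, ht⟩ := Infinite.exists_notMem_finset (insert 0 (nthRoots 4 (1 : K)).toFinset)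
  simp only [Finset.mem_insert, Multiset.mem_toFinset, mem_nthRoots four_pos, not_or] at ht
  exact ⟨t, ht⟩

namespace Matrix.SpecialLinearGroup

variable {K : Type*} [Field K]

def companion (τ : K) : SL(2, K) := ⟨!![0, -1; 1, τ], by simp [det_fin_two_of]⟩

lemma coe_companion (τ : K) : (companion τ : Matrix (Fin 2) (Fin 2) K) = !![0, -1; 1, τ] := rfl

lemma det_eq_one_fin_two (g : SL(2, K)) : g 0 0 * g 1 1 - g 0 1 * g 1 0 = 1 := by
  have := g.det_coe; rwa [det_fin_two] at this

/-- The columns of `P` are `v = (p, q)` and `g v`; the bracket in `h` is `det (v, g v)`, and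
Cayley–Hamilton `g² = (tr g) g - 1` gives `g P = P (companion (tr g))`. -/
lemma isConj_companion_trace_of_sq_mul_eq_one (g : SL(2, K)) {p q ℓ : K}
    (h : ℓ ^ 2 * (g 1 0 * p ^ 2 + (g 1 1 - g 0 0) * p * q - g 0 1 * q ^ 2) = 1) :
    IsConj (companion (trace (g : Matrix (Fin 2) (Fin 2) K))) g := by
  have hg := det_eq_one_fin_two g
  let P : SL(2, K) :=
    ⟨!![ℓ * p, ℓ * (g 0 0 * p + g 0 1 * q); ℓ * q, ℓ * (g 1 0 * p + g 1 1 * q)],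
      by rw [det_fin_two_of]; linear_combination h⟩
  refine isConj_iff.2 ⟨P, mul_inv_eq_iff_eq_mul.2 (Subtype.ext ?_)⟩
  rw [coe_mul, coe_mul, coe_companion, trace_fin_two]
  ext i j
  fin_cases i <;> fin_cases j <;>
    simp only [P, Fin.zero_eta, Fin.mk_one, Fin.isValue, mul_apply, Fin.sum_univ_two, of_apply,
      cons_val', cons_val_zero, cons_val_one, empty_val', cons_val_fin_one] <;>
    first | ring1 | linear_combination (ℓ * p) * hg | linear_combination (ℓ * q) * hg

lemma mem_center_iff_fin_two {g : SL(2, K)} :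
    g ∈ center SL(2, K) ↔ g 0 1 = 0 ∧ g 1 0 = 0 ∧ g 0 0 = g 1 1 := by
  constructor
  · intro hg
    have hscalar := congrFun₂ (scalar_eq_self_of_mem_center hg 0)
    exact ⟨by simpa using (hscalar 0 1).symm, by simpa using (hscalar 1 0).symm,
      by simpa using hscalar 1 1⟩
  · rintro ⟨h01, h10, h⟩
    refine mem_center_iff.2 ⟨g 0 0, ?_, ?_⟩
    · rw [Fintype.card_fin]
      linear_combination (det_eq_one_fin_two g) + g 0 0 * h + g 0 1 * h10
    · ext i j
      fin_cases i <;> fin_cases j <;> simp [h01, h10, h]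

lemma coe_eq_one_or_eq_neg_one_of_mem_center {g : SL(2, K)} (hg : g ∈ center SL(2, K)) :
    (g : Matrix (Fin 2) (Fin 2) K) = 1 ∨ (g : Matrix (Fin 2) (Fin 2) K) = -1 := by
  obtain ⟨r, hr, hrg⟩ := mem_center_iff.1 hg
  rw [Fintype.card_fin, sq_eq_one_iff] at hr
  rcases hr with rfl | rfl <;> simp only [← hrg, map_one, map_neg, true_or, or_true]

lemma isConj_companion_trace [IsAlgClosed K] {g : SL(2, K)} (hg : g ∉ center SL(2, K)) :
    IsConj (companion (trace (g : Matrix (Fin 2) (Fin 2) K))) g := by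
  obtain ⟨p, q, hD⟩ : ∃ p q : K, g 1 0 * p ^ 2 + (g 1 1 - g 0 0) * p * q - g 0 1 * q ^ 2 ≠ 0 := by
    by_contra! h
    have h10 := h 1 0
    have h01 := h 0 1
    have h11 := h 1 1
    simp only [one_pow, mul_one, zero_pow two_ne_zero, mul_zero, sub_zero, zero_sub, add_zero,
      neg_eq_zero] at h10 h01 h11
    exact hg (mem_center_iff_fin_two.2 ⟨h01, h10, by linear_combination -h11 + h10 - h01⟩)
  obtain ⟨ℓ, hℓ⟩ := IsAlgClosed.exists_pow_nat_eq
    (g 1 0 * p ^ 2 + (g 1 1 - g 0 0) * p * q - g 0 1 * q ^ 2)⁻¹ two_pos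
  exact isConj_companion_trace_of_sq_mul_eq_one g (p := p) (q := q) (ℓ := ℓ)
    (by rw [hℓ, inv_mul_cancel₀ hD])

lemma isConj_of_trace_eq_s15 [IsAlgClosed K] {g h : SL(2, K)} (hg : g ∉ center SL(2, K))
    (hh : h ∉ center SL(2, K))
    (htr : trace (g : Matrix (Fin 2) (Fin 2) K) = trace (h : Matrix (Fin 2) (Fin 2) K)) :
    IsConj g h :=
  (isConj_companion_trace hg).symm.trans (htr ▸ isConj_companion_trace hh)

lemma diag2_pow (t : K) (ht : t ≠ 0) (k : ℕ) : diag2 t ht ^ k = diag2 (t ^ k) (pow_ne_zero k ht) :=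
  Subtype.ext <| by
    rw [coe_pow, diag2_coe, diag2_coe, diagonal_pow]
    ext i j
    fin_cases i <;> fin_cases j <;> simp

lemma coe_commutatorElement_diag2 (t : K) (ht : t ≠ 0) (b : SL(2, K)) :
    ((⁅diag2 t ht, b⁆ : SL(2, K)) : Matrix (Fin 2) (Fin 2) K) =
      !![1 + (1 - t ^ 2) * (b 0 1 * b 1 0), (t ^ 2 - 1) * b 0 0 * b 0 1;
        (t⁻¹ ^ 2 - 1) * b 1 0 * b 1 1, 1 + (1 - t⁻¹ ^ 2) * (b 0 1 * b 1 0)] := by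
  have hb := det_eq_one_fin_two b
  rw [commutatorElement_def, diag2_inv, coe_mul, coe_mul, coe_mul, diag2_coe', diag2_coe',
    coe_inv, adjugate_fin_two, eta_fin_two (b : Matrix (Fin 2) (Fin 2) K)]
  simp only [mul_fin_two]
  ext i j
  fin_cases i <;> fin_cases j <;>
    simp only [Fin.zero_eta, Fin.mk_one, Fin.isValue, of_apply, cons_val', cons_val_zero,
      cons_val_one, empty_val', cons_val_fin_one] <;> field_simp <;>
    first
      | ring1
      | linear_combination hb
      | linear_combination t * hb
      | linear_combination t ^ 2 * hb

lemma trace_commutatorElement_diag2 (t : K) (ht : t ≠ 0) (b : SL(2, K)) :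
    trace ((⁅diag2 t ht, b⁆ : SL(2, K)) : Matrix (Fin 2) (Fin 2) K) =
      2 - (t - t⁻¹) ^ 2 * (b 0 1 * b 1 0) := by
  rw [coe_commutatorElement_diag2, trace_fin_two_of]
  field_simp
  ring

lemma commutatorElement_diag2_notMem_center {t : K} (ht : t ≠ 0) (ht4 : t ^ 4 ≠ 1) {b : SL(2, K)}
    (hb : b 0 1 ≠ 0 ∨ b 1 0 ≠ 0) : ⁅diag2 t ht, b⁆ ∉ center SL(2, K) := by
  intro hc
  obtain ⟨h01, h10, h11⟩ := mem_center_iff_fin_two.1 hc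
  simp only [coe_commutatorElement_diag2, of_apply, cons_val', cons_val_zero, cons_val_one,
    empty_val', cons_val_fin_one] at h01 h10 h11
  have ht2 : t ^ 2 - 1 ≠ 0 := fun h ↦ ht4 (by linear_combination (t ^ 2 + 1) * h)
  have ht2' : t⁻¹ ^ 2 - 1 ≠ 0 := fun h ↦ ht2 (by field_simp at h; linear_combination -h)
  have ht4' : t⁻¹ ^ 2 - t ^ 2 ≠ 0 := fun h ↦ ht4 (by field_simp at h; linear_combination -h)
  have hxy : b 0 0 * b 0 1 = 0 :=
    (mul_eq_zero.1 (by linear_combination h01)).resolve_left ht2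
  have hzw : b 1 0 * b 1 1 = 0 :=
    (mul_eq_zero.1 (by linear_combination h10)).resolve_left ht2'
  have hyz : b 0 1 * b 1 0 = 0 :=
    (mul_eq_zero.1 (by linear_combination h11)).resolve_left ht4'
  have hb' := det_eq_one_fin_two b
  rcases hb with hb | hb
  · exact hb (by linear_combination b 1 1 * hxy - b 0 1 * hyz - b 0 1 * hb')
  · exact hb (by linear_combination b 0 0 * hzw - b 1 0 * hyz - b 1 0 * hb')

lemma exists_conj_diag2_offDiag_prod_eq [IsAlgClosed K] {t : K} (ht : t ≠ 0) (hd : t - t⁻¹ ≠ 0)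
    (c : K) :
    ∃ C : SL(2, K), ((C * diag2 t ht * C⁻¹) 0 1 ≠ 0 ∨ (C * diag2 t ht * C⁻¹) 1 0 ≠ 0) ∧
      (C * diag2 t ht * C⁻¹) 0 1 * (C * diag2 t ht * C⁻¹) 1 0 = c := by
  obtain ⟨u, hu⟩ := exists_mul_one_add_eq (-c / (t - t⁻¹) ^ 2)
  let C : SL(2, K) := ⟨!![1, u; 1, 1 + u], by rw [det_fin_two_of]; ring⟩
  have h01 : (C * diag2 t ht * C⁻¹) 0 1 = u * (t⁻¹ - t) := by
    rw [coe_mul, coe_mul, coe_inv, adjugate_fin_two, diag2_coe']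
    simp only [C, Fin.isValue, mul_apply, Fin.sum_univ_two, of_apply, cons_val', cons_val_zero,
      cons_val_one, empty_val', cons_val_fin_one]
    ring
  have h10 : (C * diag2 t ht * C⁻¹) 1 0 = (1 + u) * (t - t⁻¹) := by
    rw [coe_mul, coe_mul, coe_inv, adjugate_fin_two, diag2_coe']
    simp only [C, Fin.isValue, mul_apply, Fin.sum_univ_two, of_apply, cons_val', cons_val_zero,
      cons_val_one, empty_val', cons_val_fin_one]
    ring
  refine ⟨C, ?_, ?_⟩
  · rw [h01, h10]
    by_contra! h
    have hu0 : u = 0 := (mul_eq_zero.1 h.1).resolve_right (by rwa [← neg_sub, neg_eq_zero])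
    have hu1 : 1 + u = 0 := (mul_eq_zero.1 h.2).resolve_right hd
    exact one_ne_zero (by linear_combination hu1 - hu0)
  · rw [h01, h10]
    linear_combination (-(t - t⁻¹) ^ 2) * hu - div_mul_cancel₀ (-c) (pow_ne_zero 2 hd)

lemma exists_commutatorElement_pow_notMem_center_trace_eq [IsAlgClosed K] {m n : ℕ} (hm : 0 < m)
    (hn : 0 < n) (τ : K) : ∃ x y : SL(2, K), ⁅x ^ m, y ^ n⁆ ∉ center SL(2, K) ∧
      trace ((⁅x ^ m, y ^ n⁆ : SL(2, K)) : Matrix (Fin 2) (Fin 2) K) = τ := by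
  obtain ⟨t, ht, ht4⟩ := exists_ne_zero_pow_four_ne_one K
  have hd : t - t⁻¹ ≠ 0 := fun h ↦ ht4 (by field_simp at h; linear_combination (t ^ 2 + 1) * h)
  obtain ⟨C, hb, hc⟩ := exists_conj_diag2_offDiag_prod_eq ht hd ((2 - τ) / (t - t⁻¹) ^ 2)
  obtain ⟨s, hs⟩ := IsAlgClosed.exists_pow_nat_eq t hm
  obtain ⟨r, hr⟩ := IsAlgClosed.exists_pow_nat_eq t hn
  have hs0 : s ≠ 0 := fun h ↦ ht (by rw [← hs, h, zero_pow hm.ne'])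
  have hr0 : r ≠ 0 := fun h ↦ ht (by rw [← hr, h, zero_pow hn.ne'])
  refine ⟨diag2 s hs0, C * diag2 r hr0 * C⁻¹, ?_⟩
  rw [conj_pow, diag2_pow, diag2_pow]
  simp only [hs, hr]
  refine ⟨commutatorElement_diag2_notMem_center _ ht4 hb, ?_⟩
  rw [trace_commutatorElement_diag2, hc, mul_div_cancel₀ _ (pow_ne_zero 2 hd)]
  ring

end Matrix.SpecialLinearGroup

/-- Surjectivity of the word map `w = ⁅xᵐ, yⁿ⁆` on `PSL₂(ℂ)`: for positive integers `m, n`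
and every `g ∈ SL₂(ℂ)` there are `x, y ∈ SL₂(ℂ)` with `xᵐ yⁿ x⁻ᵐ y⁻ⁿ = ±g`. -/
theorem power_commutator_word_map_surjective_PSL2C (m n : ℕ) (hm : 0 < m) (hn : 0 < n)
    (g : Matrix.SpecialLinearGroup (Fin 2) ℂ) :
    ∃ x y : Matrix.SpecialLinearGroup (Fin 2) ℂ,
      (↑(x ^ m * y ^ n * (x ^ m)⁻¹ * (y ^ n)⁻¹) : Matrix (Fin 2) (Fin 2) ℂ)
          = (↑g : Matrix (Fin 2) (Fin 2) ℂ) ∨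
      (↑(x ^ m * y ^ n * (x ^ m)⁻¹ * (y ^ n)⁻¹) : Matrix (Fin 2) (Fin 2) ℂ)
          = -(↑g : Matrix (Fin 2) (Fin 2) ℂ) := by
  simp only [← commutatorElement_def]
  by_cases hg : g ∈ center SL(2, ℂ)
  · refine ⟨1, 1, ?_⟩
    rcases coe_eq_one_or_eq_neg_one_of_mem_center hg with h | h <;> simp [h]
  · obtain ⟨x, y, hc, htr⟩ := exists_commutatorElement_pow_notMem_center_trace_eq hm hn
      (trace (g : Matrix (Fin 2) (Fin 2) ℂ))
    obtain ⟨x', y', h⟩ := exists_commutatorElement_pow_eq_of_isConj (isConj_of_trace_eq_s15 hc hg htr)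
    exact ⟨x', y', Or.inl (congrArg _ h)⟩
end
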